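/- Let k ≥ n and let m = x_1⋯x_k be a graded monomial. Then m is a graded monomial identity of BT(n−1,1;F) if and only if m is a consequence of a graded monomial identity of BT(n−1,1;F) of degree n; that is, if and only if m lies in the T_{Z_n}-ideal generated by the graded monomial identities of BT(n−1,1;F) of degree n. -/

import Mathlib

open scoped BigOperators

/-- The free associative algebra on variables indexed by pairs (degree in `ZMod n`, index). -/
abbrev FA (F : Type*) [Field F] (n : ℕ) := FreeAlgebra F (ZMod n × ℕ)

/-- The graded monomial corresponding to a word of variables. -/
def mono (F : Type*) [Field F] (n : ℕ) (w : List (ZMod n × ℕ)) : FA F n :=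
  (w.map fun p => FreeAlgebra.ι F p).prod

/-- The homogeneous component of degree `g` of the free graded algebra. -/
def homComp (F : Type*) [Field F] (n : ℕ) (g : ZMod n) : Submodule F (FA F n) :=
  Submodule.span F
    {x | ∃ w : List (ZMod n × ℕ), (w.map Prod.fst).sum = g ∧ x = mono F n w}

/-- A `T_{Z_n}`-ideal: invariant under all graded endomorphisms. -/
def IsTIdeal (F : Type*) [Field F] (n : ℕ) (I : Ideal (FA F n)) : Prop :=
  ∀ φ : FA F n →ₐ[F] FA F n,
    (∀ g : ZMod n, ∀ x ∈ homComp F n g, φ x ∈ homComp F n g) →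
    ∀ x ∈ I, φ x ∈ I

/-- The `T_{Z_n}`-ideal generated by a set of graded polynomials. -/
def TIdealGen (F : Type*) [Field F] (n : ℕ) (S : Set (FA F n)) : Ideal (FA F n) :=
  sInf {I : Ideal (FA F n) | IsTIdeal F n I ∧ S ⊆ I}

/-- The Vasilovsky polynomials. -/
def vasSet (F : Type*) [Field F] (n : ℕ) : Set (FA F n) :=
  {f | ∃ r s : ℕ,
      f = FreeAlgebra.ι F ((0 : ZMod n), r) * FreeAlgebra.ι F ((0 : ZMod n), s)
        - FreeAlgebra.ι F ((0 : ZMod n), s) * FreeAlgebra.ι F ((0 : ZMod n), r)} ∪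
  {f | ∃ (g : ZMod n) (r s t : ℕ),
      f = FreeAlgebra.ι F (g, r) * FreeAlgebra.ι F (-g, s) * FreeAlgebra.ι F (g, t)
        - FreeAlgebra.ι F (g, t) * FreeAlgebra.ι F (-g, s) * FreeAlgebra.ι F (g, r)}

/-- `I_n`, the `T_{Z_n}`-ideal generated by the Vasilovsky identities. -/
def In' (F : Type*) [Field F] (n : ℕ) : Ideal (FA F n) := TIdealGen F n (vasSet F n)

/-- `f` is a graded identity of the algebra `B` with `ZMod n`-grading `gr`. -/
def IsGIdentity (F : Type*) [Field F] (n : ℕ) {B : Type*} [Ring B] [Algebra F B]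
    (gr : ZMod n → Set B) (f : FA F n) : Prop :=
  ∀ σ : ZMod n × ℕ → B, (∀ p : ZMod n × ℕ, σ p ∈ gr p.1) →
    FreeAlgebra.lift F σ f = 0

/-- The ideal of graded identities. -/
def TIdOf (F : Type*) [Field F] (n : ℕ) {B : Type*} [Ring B] [Algebra F B]
    (gr : ZMod n → Set B) : Ideal (FA F n) where
  carrier := {f | IsGIdentity F n gr f}
  zero_mem' := fun σ _ => map_zero _
  add_mem' := fun ha hb σ hσ => by
    rw [map_add, ha σ hσ, hb σ hσ, add_zero]
  smul_mem' := fun c a ha σ hσ => by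
    rw [smul_eq_mul, map_mul, ha σ hσ, mul_zero]

/-- The Di Vincenzo–Vasilovsky grading of the matrix algebra. -/
def matGr (F : Type*) [Field F] (n : ℕ) (t : ZMod n) :
    Set (Matrix (ZMod n) (ZMod n) F) :=
  {A | ∀ i j : ZMod n, A i j ≠ 0 → j - i = t}

/-- The index of the block (of sizes `d 0, d 1, …`) containing row/column `i`. -/
noncomputable def blockOf (d : ℕ → ℕ) (i : ℕ) : ℕ :=
  sInf {k | i < ∑ j ∈ Finset.range (k + 1), d j}

/-- The grading of the block-triangular algebra `BT(d₀,…,d_{m-1};F)`: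
homogeneous component of degree `t`. -/
def BTgr (F : Type*) [Field F] (n : ℕ) (d : ℕ → ℕ) (t : ZMod n) :
    Set (Matrix (ZMod n) (ZMod n) F) :=
  {A | ∀ i j : ZMod n, A i j ≠ 0 → j - i = t ∧ blockOf d i.val ≤ blockOf d j.val}

/-- Number of zero rows of a matrix. -/
noncomputable def fRows {R : Type*} [Zero R] {n : ℕ} (A : Matrix (ZMod n) (ZMod n) R) : ℕ :=
  Nat.card {i : ZMod n // A i = 0}

/-- Number of falls between `A` and `B`. -/
noncomputable def falls {R : Type*} [CommRing R] {n : ℕ} [NeZero n]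
    (A B : Matrix (ZMod n) (ZMod n) R) : ℕ :=
  fRows (A * B) - fRows A

/-- The generic matrix `G_r^{(g)}` of `BT(d;F)`. -/
noncomputable def genBT (F : Type*) [Field F] (n : ℕ) (d : ℕ → ℕ) (g : ZMod n) (r : ℕ) :
    Matrix (ZMod n) (ZMod n) (MvPolynomial ((ZMod n × ZMod n) × ℕ) F) :=
  Matrix.of fun p q =>
    if q - p = g ∧ blockOf d p.val ≤ blockOf d q.val
    then MvPolynomial.X ((p, q), r) else 0

/-- The grading of `BT(n-1,1;F)`: homogeneous component of degree `t`. -/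
def BT1gr (F : Type*) [Field F] (n : ℕ) (t : ZMod n) :
    Set (Matrix (ZMod n) (ZMod n) F) :=
  {A | (∀ i j : ZMod n, A i j ≠ 0 → j - i = t) ∧
       ∀ j : ZMod n, j.val < n - 1 → A ((n - 1 : ℕ) : ZMod n) j = 0}

/-- The matrix `Σ_{i=1}^{n-1} e_{i,i+g}` used in the canonical substitution. -/
def subMat (F : Type*) [Field F] (n : ℕ) (g : ZMod n) :
    Matrix (ZMod n) (ZMod n) F :=
  Matrix.of fun p q => if p ≠ ((n - 1 : ℕ) : ZMod n) ∧ q = p + g then 1 else 0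

set_option linter.unusedSectionVars false

set_option maxHeartbeats 1000000
section Basic
variable (F : Type*) [Field F] (n : ℕ)

theorem mono_nil : mono F n [] = 1 := rfl

theorem mono_cons (p : ZMod n × ℕ) (w : List (ZMod n × ℕ)) :
    mono F n (p :: w) = FreeAlgebra.ι F p * mono F n w := by
  simp [mono]

theorem mono_append (a b : List (ZMod n × ℕ)) :
    mono F n (a ++ b) = mono F n a * mono F n b := by
  simp [mono]

theorem mono_singleton (p : ZMod n × ℕ) : mono F n [p] = FreeAlgebra.ι F p := by
  simp [mono]

theorem lift_mono {B : Type*} [Semiring B] [Algebra F B] (σ : ZMod n × ℕ → B)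
    (w : List (ZMod n × ℕ)) :
    FreeAlgebra.lift F σ (mono F n w) = (w.map σ).prod := by
  unfold mono
  rw [map_list_prod, List.map_map]
  congr 1
  apply List.map_congr_left
  intro p _
  simp

theorem mono_mem_homComp (w : List (ZMod n × ℕ)) :
    mono F n w ∈ homComp F n ((w.map Prod.fst).sum) :=
  Submodule.subset_span ⟨w, rfl, rfl⟩

theorem ι_mem_homComp (p : ZMod n × ℕ) :
    FreeAlgebra.ι F p ∈ homComp F n p.1 := by
  have := mono_mem_homComp F n [p]
  simpa [mono_singleton] using this

end Basic

section BT1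
variable (F : Type*) [Field F] (n : ℕ) [NeZero n]

theorem cast_sub_one : ((n - 1 : ℕ) : ZMod n) = -1 := by
  have h1 : 1 ≤ n := Nat.one_le_iff_ne_zero.mpr (NeZero.ne n)
  push_cast [Nat.cast_sub h1]
  simp

theorem neg_one_val : (-1 : ZMod n).val = n - 1 := by
  have h := Nat.pos_of_ne_zero (NeZero.ne n)
  rw [← cast_sub_one n, ZMod.val_cast_of_lt]
  omega

theorem eq_neg_one_of_val (j : ZMod n) (h : ¬ j.val < n - 1) : j = -1 := by
  apply ZMod.val_injective
  rw [neg_one_val]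
  have := ZMod.val_lt j
  omega

/-- Row `-1` of a homogeneous element of nonzero degree is zero. -/
theorem BT1gr_row_neg_one {g : ZMod n} {A : Matrix (ZMod n) (ZMod n) F}
    (hA : A ∈ BT1gr F n g) (hg : g ≠ 0) (j : ZMod n) : A (-1) j = 0 := by
  by_cases hj : j.val < n - 1
  · rw [← cast_sub_one n]; exact hA.2 j hj
  · by_contra h
    have hj1 : j = -1 := eq_neg_one_of_val n j hj
    have := hA.1 (-1) j h
    rw [hj1] at this
    simp at this
    exact hg this.symm

theorem BT1gr_zero (g : ZMod n) : (0 : Matrix (ZMod n) (ZMod n) F) ∈ BT1gr F n g := by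
  constructor
  · intro i j h; simp at h
  · intro j _; simp

theorem BT1gr_add {g : ZMod n} {A B : Matrix (ZMod n) (ZMod n) F}
    (hA : A ∈ BT1gr F n g) (hB : B ∈ BT1gr F n g) : A + B ∈ BT1gr F n g := by
  constructor
  · intro i j h
    by_cases hA0 : A i j = 0
    · exact hB.1 i j (by simpa [Matrix.add_apply, hA0] using h)
    · exact hA.1 i j hA0
  · intro j hj
    simp [Matrix.add_apply, hA.2 j hj, hB.2 j hj]

theorem BT1gr_smul {g : ZMod n} (c : F) {A : Matrix (ZMod n) (ZMod n) F}
    (hA : A ∈ BT1gr F n g) : c • A ∈ BT1gr F n g := by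
  constructor
  · intro i j h
    apply hA.1 i j
    intro h0
    rw [Matrix.smul_apply, h0, smul_zero] at h
    exact h rfl
  · intro j hj
    rw [Matrix.smul_apply, hA.2 j hj, smul_zero]

theorem BT1gr_one : (1 : Matrix (ZMod n) (ZMod n) F) ∈ BT1gr F n 0 := by
  constructor
  · intro i j h
    rw [Matrix.one_apply] at h
    by_cases hij : i = j
    · rw [hij]; simp
    · simp [hij] at h
  · intro j hj
    rw [Matrix.one_apply]
    have : ((n - 1 : ℕ) : ZMod n) ≠ j := by
      intro h
      rw [← h, cast_sub_one n, neg_one_val] at hj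
      omega
    simp [this]

theorem BT1gr_mul {a b : ZMod n} {A B : Matrix (ZMod n) (ZMod n) F}
    (hA : A ∈ BT1gr F n a) (hB : B ∈ BT1gr F n b) : A * B ∈ BT1gr F n (a + b) := by
  constructor
  · intro i j h
    rw [Matrix.mul_apply] at h
    obtain ⟨t, _, ht⟩ := Finset.exists_ne_zero_of_sum_ne_zero h
    have h1 : A i t ≠ 0 := fun h0 => ht (by rw [h0, zero_mul])
    have h2 : B t j ≠ 0 := fun h0 => ht (by rw [h0, mul_zero])
    have e1 := hA.1 i t h1
    have e2 := hB.1 t j h2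
    rw [← e1, ← e2]; ring
  · intro j hj
    rw [Matrix.mul_apply]
    apply Finset.sum_eq_zero
    intro t _
    by_cases hAt : A ((n - 1 : ℕ) : ZMod n) t = 0
    · rw [hAt, zero_mul]
    · have htv : ¬ t.val < n - 1 := fun h => hAt (hA.2 t h)
      have ht1 : t = -1 := eq_neg_one_of_val n t htv
      rw [ht1, ← cast_sub_one n, hB.2 j hj, mul_zero]

theorem BT1gr_list_prod (σ : ZMod n × ℕ → Matrix (ZMod n) (ZMod n) F)
    (hσ : ∀ p, σ p ∈ BT1gr F n p.1) (w : List (ZMod n × ℕ)) :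
    (w.map σ).prod ∈ BT1gr F n ((w.map Prod.fst).sum) := by
  induction w with
  | nil => simpa using BT1gr_one F n
  | cons p w ih =>
      simpa using BT1gr_mul F n (hσ p) ih

/-- The image of a homogeneous element of degree `g` under a graded substitution lies
in the homogeneous component of degree `g` of the matrix algebra. -/
theorem lift_mem_BT1gr (σ : ZMod n × ℕ → Matrix (ZMod n) (ZMod n) F)
    (hσ : ∀ p, σ p ∈ BT1gr F n p.1) (g : ZMod n) (x : FA F n)
    (hx : x ∈ homComp F n g) :
    FreeAlgebra.lift F σ x ∈ BT1gr F n g := by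
  induction hx using Submodule.span_induction with
  | mem x hx =>
      obtain ⟨w, hw, rfl⟩ := hx
      rw [lift_mono]
      rw [← hw]
      exact BT1gr_list_prod F n σ hσ w
  | zero => simpa using BT1gr_zero F n g
  | add x y _ _ hx hy => rw [map_add]; exact BT1gr_add F n hx hy
  | smul c x _ hx => rw [map_smul]; exact BT1gr_smul F n c hx

end BT1

/-- Partial degree sums. -/
def pS (n : ℕ) (g : ℕ → ZMod n) (j : ℕ) : ZMod n := ((List.range j).map g).sum

theorem pS_zero (n : ℕ) (g : ℕ → ZMod n) : pS n g 0 = 0 := rfl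

theorem pS_succ (n : ℕ) (g : ℕ → ZMod n) (j : ℕ) :
    pS n g (j + 1) = pS n g j + g j := by
  simp [pS, List.range_succ]

/-- The canonical maximal homogeneous substitution matrix. -/
def sigmaMax (F : Type*) [Field F] (n : ℕ) (g : ZMod n) :
    Matrix (ZMod n) (ZMod n) F :=
  Matrix.of fun r q => if q = r + g ∧ (r ≠ -1 ∨ g = 0) then 1 else 0


section Crit
variable (F : Type*) [Field F] (n : ℕ) [NeZero n]

theorem sigmaMax_mem (g : ZMod n) : sigmaMax F n g ∈ BT1gr F n g := by
  constructor
  · intro i j h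
    simp only [sigmaMax, Matrix.of_apply] at h
    by_cases hc : j = i + g ∧ (i ≠ -1 ∨ g = 0)
    · rw [hc.1]; ring
    · simp [hc] at h
  · intro j hj
    simp only [sigmaMax, Matrix.of_apply, cast_sub_one n]
    rw [if_neg]
    rintro ⟨h1, h2⟩
    rcases h2 with h2 | h2
    · exact h2 rfl
    · rw [h2, add_zero] at h1
      rw [h1, neg_one_val n] at hj
      omega

theorem survive (g : ℕ → ZMod n) :
    ∀ (c s : ℕ) (p : ZMod n),
      (∀ j, s ≤ j → j < s + c → p + (pS n g j - pS n g s) = -1 → g j = 0) →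
      ∀ q, (((List.range' s c).map fun j => sigmaMax F n (g j)).prod) p q
        = if q = p + (pS n g (s + c) - pS n g s) then 1 else 0 := by
  intro c
  induction c with
  | zero =>
      intro s p _ q
      simp only [List.range'_zero, List.map_nil, List.prod_nil, Nat.add_zero, sub_self,
        add_zero]
      rcases eq_or_ne q p with h | h
      · rw [if_pos h, h, Matrix.one_apply_eq]
      · rw [if_neg h, Matrix.one_apply_ne (Ne.symm h)]
  | succ c ih =>
      intro s p hp q
      rw [List.range'_succ, List.map_cons, List.prod_cons, Matrix.mul_apply]
      have hrow : p = -1 → g s = 0 := by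
        intro h
        exact hp s le_rfl (by omega) (by rw [sub_self, add_zero]; exact h)
      have hcond : p ≠ -1 ∨ g s = 0 := by
        by_cases h : p = -1
        · exact Or.inr (hrow h)
        · exact Or.inl h
      have hσ : ∀ t, sigmaMax F n (g s) p t = if t = p + g s then 1 else 0 := by
        intro t
        simp only [sigmaMax, Matrix.of_apply]
        by_cases h : t = p + g s
        · simp [h, hcond]
        · simp [h]
      have hsum : ∑ t, sigmaMax F n (g s) p t *
          (((List.range' (s+1) c).map fun j => sigmaMax F n (g j)).prod) t q
          = (((List.range' (s+1) c).map fun j => sigmaMax F n (g j)).prod) (p + g s) q := by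
        rw [Finset.sum_congr rfl (fun t _ => by rw [hσ t, ite_mul, one_mul, zero_mul])]
        exact Fintype.sum_ite_eq' (p + g s) _
      rw [hsum]
      rw [ih (s+1) (p + g s) ?_]
      · have h1 : s + 1 + c = s + (c + 1) := by omega
        have h2 : pS n g (s+1) = pS n g s + g s := pS_succ n g s
        rw [h1, h2, show p + g s + (pS n g (s+(c+1)) - (pS n g s + g s))
          = p + (pS n g (s+(c+1)) - pS n g s) from by ring]
      · intro j hj1 hj2 hj3
        apply hp j (by omega) (by omega)
        rw [pS_succ] at hj3
        linear_combination hj3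

theorem kill (v : ℕ → ZMod n × ℕ) (σ : ZMod n × ℕ → Matrix (ZMod n) (ZMod n) F)
    (hσ : ∀ p, σ p ∈ BT1gr F n p.1) :
    ∀ (c s : ℕ) (p : ZMod n),
      (∃ j, s ≤ j ∧ j < s + c ∧
        p + (pS n (fun i => (v i).1) j - pS n (fun i => (v i).1) s) = -1 ∧ (v j).1 ≠ 0) →
      ∀ q, (((List.range' s c).map fun j => σ (v j)).prod) p q = 0 := by
  set g : ℕ → ZMod n := fun i => (v i).1 with hg
  intro c
  induction c with
  | zero =>
      rintro s p ⟨j, hj1, hj2, -, -⟩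
      omega
  | succ c ih =>
      rintro s p ⟨j, hj1, hj2, hj3, hj4⟩ q
      rw [List.range'_succ, List.map_cons, List.prod_cons, Matrix.mul_apply]
      apply Finset.sum_eq_zero
      intro t _
      by_cases hjs : j = s
      · have hp : p = -1 := by
          subst hjs
          rw [sub_self, add_zero] at hj3
          exact hj3
        rw [hp, BT1gr_row_neg_one F n (hσ (v s)) (by rw [← hjs]; exact hj4) t, zero_mul]
      · by_cases ht : t = p + g s
        · rw [ih (s+1) t ⟨j, by omega, by omega, ?_, hj4⟩ q, mul_zero]
          rw [ht, pS_succ]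
          linear_combination hj3
        · have : σ (v s) p t = 0 := by
            by_contra h
            have e := (hσ (v s)).1 p t h
            apply ht
            show t = p + (v s).1
            linear_combination e
          rw [this, zero_mul]

theorem identity_of_criterion (k : ℕ) (v : ℕ → ZMod n × ℕ)
    (h : ∀ c : ZMod n, ∃ j, j < k ∧ pS n (fun i => (v i).1) j = c ∧ (v j).1 ≠ 0) :
    IsGIdentity F n (BT1gr F n) (mono F n ((List.range k).map v)) := by
  intro σ hσ
  rw [lift_mono, List.map_map]
  ext p q
  rw [List.range_eq_range']
  obtain ⟨j, hj1, hj2, hj3⟩ := h (-1 - p)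
  have := kill F n v σ hσ k 0 p ⟨j, Nat.zero_le j, by omega, by
    rw [pS_zero, sub_zero, hj2]; ring, hj3⟩ q
  simpa [Function.comp_def] using this

theorem criterion_of_identity (k : ℕ) (v : ℕ → ZMod n × ℕ)
    (hid : IsGIdentity F n (BT1gr F n) (mono F n ((List.range k).map v))) :
    ∀ c : ZMod n, ∃ j, j < k ∧ pS n (fun i => (v i).1) j = c ∧ (v j).1 ≠ 0 := by
  set g : ℕ → ZMod n := fun i => (v i).1 with hg
  intro c
  by_contra hc
  push_neg at hc
  have hc' : ∀ j, j < k → pS n g j = c → g j = 0 := by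
    intro j hj hpj
    by_contra h0
    exact h0 (hc j hj hpj)
  have h0 := hid (fun p => sigmaMax F n p.1) (fun p => sigmaMax_mem F n p.1)
  rw [lift_mono, List.map_map, List.range_eq_range'] at h0
  have h1 := survive F n g k 0 (-1 - c) ?_ ((-1 - c) + (pS n g (0 + k) - pS n g 0))
  · rw [if_pos rfl] at h1
    have h2 : ((List.range' 0 k).map fun j => sigmaMax F n (g j)).prod = 0 := by
      simpa [Function.comp_def] using h0
    rw [h2] at h1
    simp at h1
  · intro j _ hj2 hj3
    apply hc' j (by omega)
    rw [pS_zero, sub_zero] at hj3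
    linear_combination hj3
end Crit

section Graded
variable (F : Type*) [Field F] (n : ℕ)

theorem graded_lift (σφ : ZMod n × ℕ → FA F n)
    (hσφ : ∀ p, ∃ wp : List (ZMod n × ℕ),
      (wp.map Prod.fst).sum = p.1 ∧ σφ p = mono F n wp) :
    ∀ (g : ZMod n) (x : FA F n), x ∈ homComp F n g →
      FreeAlgebra.lift F σφ x ∈ homComp F n g := by
  have key : ∀ w : List (ZMod n × ℕ), ∃ w' : List (ZMod n × ℕ),
      (w'.map Prod.fst).sum = (w.map Prod.fst).sum ∧
      (w.map σφ).prod = mono F n w' := by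
    intro w
    induction w with
    | nil => exact ⟨[], by simp, by simp [mono_nil]⟩
    | cons p w ih =>
        obtain ⟨w', hw1, hw2⟩ := ih
        obtain ⟨wp, hp1, hp2⟩ := hσφ p
        refine ⟨wp ++ w', ?_, ?_⟩
        · simp [hp1, hw1]
        · rw [List.map_cons, List.prod_cons, hw2, hp2, mono_append]
  intro g x hx
  induction hx using Submodule.span_induction with
  | mem x hx =>
      obtain ⟨w, hw, rfl⟩ := hx
      rw [lift_mono]
      obtain ⟨w', h1, h2⟩ := key w
      rw [h2, ← hw, ← h1]
      exact mono_mem_homComp F n w'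
  | zero => simp
  | add x y _ _ hx hy => rw [map_add]; exact add_mem hx hy
  | smul c x _ hx => rw [map_smul]; exact Submodule.smul_mem _ c hx

theorem range'_map_sum (v : ℕ → ZMod n × ℕ) :
    ∀ (c s : ℕ), (((List.range' s c).map v).map Prod.fst).sum
      = pS n (fun i => (v i).1) (s + c) - pS n (fun i => (v i).1) s := by
  intro c
  induction c with
  | zero => intro s; simp
  | succ c ih =>
      intro s
      rw [List.range'_succ, List.map_cons, List.map_cons, List.sum_cons, ih (s+1),
        show s + 1 + c = s + (c+1) from by omega, pS_succ n _ s]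
      ring

end Graded

section Back
variable (F : Type*) [Field F] (n : ℕ) [NeZero n]

theorem mem_TIdOf_iff {B : Type*} [Ring B] [Algebra F B] (gr : ZMod n → Set B)
    (f : FA F n) : f ∈ TIdOf F n gr ↔ IsGIdentity F n gr f := Iff.rfl

theorem TIdOf_isTIdeal : IsTIdeal F n (TIdOf F n (BT1gr F n)) := by
  intro φ hφ x hx
  rw [mem_TIdOf_iff] at hx ⊢
  intro σ hσ
  have hτ : ∀ p : ZMod n × ℕ,
      FreeAlgebra.lift F σ (φ (FreeAlgebra.ι F p)) ∈ BT1gr F n p.1 := fun p =>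
    lift_mem_BT1gr F n σ hσ p.1 _ (hφ p.1 _ (ι_mem_homComp F n p))
  have hcomp : (FreeAlgebra.lift F
      (fun p => FreeAlgebra.lift F σ (φ (FreeAlgebra.ι F p))) :
        FA F n →ₐ[F] Matrix (ZMod n) (ZMod n) F)
      = (FreeAlgebra.lift F σ).comp φ := by
    apply FreeAlgebra.hom_ext
    funext p
    simp
  have h0 := hx _ hτ
  rw [hcomp] at h0
  simpa using h0

theorem identity_of_mem_TIdealGen (f : FA F n)
    (S : Set (FA F n)) (hS : ∀ g ∈ S, IsGIdentity F n (BT1gr F n) g)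
    (h : f ∈ TIdealGen F n S) : IsGIdentity F n (BT1gr F n) f := by
  have hmem : TIdOf F n (BT1gr F n) ∈
      {I : Ideal (FA F n) | IsTIdeal F n I ∧ S ⊆ I} :=
    ⟨TIdOf_isTIdeal F n, fun g hg => (mem_TIdOf_iff F n _ g).mpr (hS g hg)⟩
  exact (mem_TIdOf_iff F n _ f).mp (sInf_le hmem h)

end Back

section Forward
variable (F : Type*) [Field F] (n : ℕ) [NeZero n]

theorem forward_mem (k : ℕ) (v : ℕ → ZMod n × ℕ) (hn2 : 2 ≤ n)
    (hid : IsGIdentity F n (BT1gr F n) (mono F n ((List.range k).map v))) :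
    mono F n ((List.range k).map v) ∈ TIdealGen F n
      {f : FA F n | ∃ u : List (ZMod n × ℕ), u.length = n ∧
        f = mono F n u ∧ IsGIdentity F n (BT1gr F n) f} := by
  classical
  set g : ℕ → ZMod n := fun i => (v i).1 with hgdef
  have C := criterion_of_identity F n k v hid
  choose J hJk hJS hJne using C
  -- the total degree
  set cs : ZMod n := pS n g k with hcsdef
  -- the witness for the total degree
  have hj1k : J cs + 1 < k := by
    rcases Nat.lt_or_ge (J cs + 1) k with h | h
    · exact h
    · exfalso
      have hk1 : J cs + 1 = k := by have := hJk cs; omega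
      have h2 : pS n g k = pS n g (J cs) + g (J cs) := by rw [← hk1, pS_succ]
      rw [hJS cs, ← hcsdef] at h2
      apply hJne cs
      show g (J cs) = 0
      linear_combination -h2
  have hPj1 : pS n g (J cs + 1) ≠ cs := by
    rw [pS_succ, hJS cs]
    intro h
    apply hJne cs
    show g (J cs) = 0
    linear_combination h
  -- the greatest index whose prefix sum differs from the total degree
  set jt : ℕ := Nat.findGreatest (fun j => pS n g j ≠ cs) (k - 1) with hjtdef
  have hjtk : jt < k := by
    have h1 : jt ≤ k - 1 := by rw [hjtdef]; exact Nat.findGreatest_le _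
    have := hJk cs
    omega
  have hPjt : pS n g jt ≠ cs := by
    rw [hjtdef]
    exact Nat.findGreatest_spec (P := fun j => pS n g j ≠ cs) (n := k - 1)
      (m := J cs + 1) (by omega) hPj1
  have hmax : ∀ j, jt < j → j ≤ k → pS n g j = cs := by
    intro j hj1 hj2
    rcases Nat.eq_or_lt_of_le hj2 with h | h
    · rw [h]
    · by_contra hne
      rw [hjtdef] at hj1
      exact Nat.findGreatest_is_greatest hj1 (by omega) hne
  have hjslt : J cs < jt := by
    have h1 : ¬ jt < J cs := by
      intro h
      exact hPj1 (hmax (J cs + 1) (by omega) (by omega))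
    have h2 : J cs ≠ jt := by
      intro h
      exact hPjt (by rw [← h, hJS cs])
    omega
  -- selection function
  set K : ZMod n → ℕ := fun c => if c = pS n g jt then jt else J c with hKdef
  have hKval : ∀ c, pS n g (K c) = c := by
    intro c
    rw [hKdef]
    by_cases h : c = pS n g jt
    · simp only [if_pos h]; exact h.symm
    · simp only [if_neg h]; exact hJS c
  have hKinj : Function.Injective K := by
    intro a b hab
    rw [← hKval a, ← hKval b, hab]
  have hKle : ∀ c, K c ≤ jt := by
    intro c
    rw [hKdef]
    by_cases h : c = pS n g jt
    · simp only [if_pos h]; exact le_rfl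
    · simp only [if_neg h]
      have h1 : ¬ jt < J c := by
        intro hlt
        have hc : pS n g (J c) = cs := hmax _ hlt (le_of_lt (hJk c))
        have hcc : c = cs := by rw [← hJS c, hc]
        rw [hcc] at hlt
        omega
      have h2 : J c ≠ jt := by
        intro hh
        exact h (by rw [← hJS c, hh])
      omega
  set B : Finset ℕ := Finset.image K Finset.univ with hBdef
  have hBcard : B.card = n := by
    rw [hBdef, Finset.card_image_of_injective _ hKinj, Finset.card_univ, ZMod.card]
  set e := B.orderIsoOfFin hBcard with hedef
  have hn1 : n - 1 < n := by omega
  have hjtmem : jt ∈ B := by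
    rw [hBdef]
    apply Finset.mem_image.mpr
    exact ⟨pS n g jt, Finset.mem_univ _, by rw [hKdef]; simp⟩
  have hBle : ∀ x ∈ B, x ≤ jt := by
    intro x hx
    rw [hBdef] at hx
    obtain ⟨c, -, rfl⟩ := Finset.mem_image.mp hx
    exact hKle c
  have htop : (e ⟨n-1, hn1⟩ : ℕ) = jt := by
    apply le_antisymm
    · exact hBle _ (e ⟨n-1, hn1⟩).2
    · have happ : (⟨jt, hjtmem⟩ : {x // x ∈ B}) = e (e.symm ⟨jt, hjtmem⟩) :=
        (e.apply_symm_apply _).symm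
      have hle : e.symm ⟨jt, hjtmem⟩ ≤ ⟨n-1, hn1⟩ := by
        have h2 := (e.symm ⟨jt, hjtmem⟩).2
        rw [Fin.le_def]
        show _ ≤ n - 1
        omega
      calc jt = ((e (e.symm ⟨jt, hjtmem⟩) : {x // x ∈ B}) : ℕ) := by rw [← happ]
        _ ≤ (e ⟨n-1, hn1⟩ : ℕ) := Subtype.coe_le_coe.mpr (e.monotone hle)
  set β : ℕ → ℕ := fun i => if h : i < n then (e ⟨i, h⟩ : ℕ) else k with hβdef
  have hβB : ∀ i (h : i < n), β i ∈ B := by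
    intro i h
    rw [hβdef]
    simp only [dif_pos h]
    exact (e ⟨i, h⟩).2
  have hstep : ∀ i, i < n → β i < β (i + 1) := by
    intro i hi
    by_cases h : i + 1 < n
    · rw [hβdef]
      simp only [dif_pos hi, dif_pos h]
      exact Subtype.coe_lt_coe.mpr (e.strictMono (by simp [Fin.lt_def]))
    · have hin : (⟨i, hi⟩ : Fin n) = ⟨n - 1, hn1⟩ := by
        apply Fin.ext; simp; omega
      rw [hβdef]
      simp only [dif_pos hi, dif_neg h, hin, htop]
      exact hjtk
  have hβmono : ∀ j, j ≤ n → ∀ i, i ≤ j → β i ≤ β j := by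
    intro j
    induction j with
    | zero =>
        intro _ i hi
        have : i = 0 := by omega
        rw [this]
    | succ j ih =>
        intro hj i hi
        rcases Nat.eq_or_lt_of_le hi with h | h
        · rw [h]
        · have h1 := ih (by omega) i (by omega)
          have h2 := hstep j (by omega)
          omega
  have hβn : β n = k := by rw [hβdef]; simp
  have hpSB : ∀ x ∈ B, K (pS n g x) = x := by
    intro x hx
    rw [hBdef] at hx
    obtain ⟨c, -, rfl⟩ := Finset.mem_image.mp hx
    rw [hKval c]
  have hSinj : ∀ i i', i < n → i' < n → pS n g (β i) = pS n g (β i') → i = i' := by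
    intro i i' hi hi' hS
    have h1 := hpSB _ (hβB i hi)
    have h2 := hpSB _ (hβB i' hi')
    have hββ : β i = β i' := by rw [← h1, ← h2, hS]
    rw [hβdef] at hββ
    simp only [dif_pos hi, dif_pos hi'] at hββ
    have := e.injective (Subtype.ext hββ)
    simpa using this
  have hSsurj : ∀ c : ZMod n, ∃ i, ∃ h : i < n, pS n g (β i) = c := by
    intro c
    have hmem : K c ∈ B := by
      rw [hBdef]; exact Finset.mem_image_of_mem K (Finset.mem_univ c)
    refine ⟨(e.symm ⟨K c, hmem⟩ : Fin n).1, (e.symm ⟨K c, hmem⟩).2, ?_⟩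
    rw [hβdef]
    simp only [dif_pos (e.symm ⟨K c, hmem⟩).2]
    have h1 : e ⟨(e.symm ⟨K c, hmem⟩ : Fin n).1, (e.symm ⟨K c, hmem⟩).2⟩
        = ⟨K c, hmem⟩ := by
      rw [Fin.eta]
      exact e.apply_symm_apply _
    rw [h1]
    exact hKval c
  set d : ℕ → ZMod n := fun i => pS n g (β (i+1)) - pS n g (β i) with hddef
  set vu : ℕ → ZMod n × ℕ := fun i => (d i, i) with hvudef
  have htel : ∀ j, pS n (fun i => (vu i).1) j = pS n g (β j) - pS n g (β 0) := by
    intro j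
    induction j with
    | zero => rw [pS_zero, sub_self]
    | succ j ih =>
        rw [pS_succ, ih]
        have hdj : (vu j).1 = pS n g (β (j+1)) - pS n g (β j) := rfl
        rw [hdj]
        ring
  have hucrit : ∀ c : ZMod n, ∃ i, i < n ∧
      pS n (fun i => (vu i).1) i = c ∧ (vu i).1 ≠ 0 := by
    intro c
    obtain ⟨i, hi, hSi⟩ := hSsurj (c + pS n g (β 0))
    refine ⟨i, hi, by rw [htel, hSi]; ring, ?_⟩
    show d i ≠ 0
    intro h0
    have hd : pS n g (β (i+1)) = pS n g (β i) := by
      have h0' : pS n g (β (i+1)) - pS n g (β i) = 0 := h0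
      linear_combination h0'
    by_cases h : i + 1 < n
    · exact absurd (hSinj (i+1) i h hi hd) (by omega)
    · have hβi : β i = jt := by
        have hfin : (⟨i, hi⟩ : Fin n) = ⟨n - 1, hn1⟩ := by
          apply Fin.ext; simp; omega
        rw [hβdef]
        simp only [dif_pos hi, hfin, htop]
      have hβi1 : β (i + 1) = k := by
        rw [hβdef]; simp only [dif_neg h]
      rw [hβi, hβi1] at hd
      exact hPjt (by rw [← hd, hcsdef])
  have huid : IsGIdentity F n (BT1gr F n) (mono F n ((List.range n).map vu)) :=
    identity_of_criterion F n n vu hucrit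
  set σφ : ZMod n × ℕ → FA F n := fun p =>
    if p.2 < n ∧ p.1 = d p.2
    then mono F n ((List.range' (β p.2) (β (p.2+1) - β p.2)).map v)
    else FreeAlgebra.ι F p with hσφdef
  have hσφ : ∀ p, ∃ wp : List (ZMod n × ℕ),
      (wp.map Prod.fst).sum = p.1 ∧ σφ p = mono F n wp := by
    intro p
    by_cases h : p.2 < n ∧ p.1 = d p.2
    · refine ⟨(List.range' (β p.2) (β (p.2+1) - β p.2)).map v, ?_,
        by rw [hσφdef]; simp only [if_pos h]⟩
      rw [range'_map_sum]
      have harith : β p.2 + (β (p.2+1) - β p.2) = β (p.2+1) := by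
        have := hstep p.2 h.1; omega
      rw [harith, h.2]
    · exact ⟨[p], by simp, by rw [hσφdef]; simp only [if_neg h, mono_singleton]⟩
  have hblocks : ∀ c, c ≤ n →
      ((List.range c).map
        (fun i => mono F n ((List.range' (β i) (β (i+1) - β i)).map v))).prod
      = mono F n ((List.range' (β 0) (β c - β 0)).map v) := by
    intro c
    induction c with
    | zero => intro _; simp [mono_nil]
    | succ c ih =>
        intro hc
        rw [List.range_succ, List.map_append, List.prod_append, ih (by omega)]
        simp only [List.map_cons, List.map_nil, List.prod_cons, List.prod_nil, mul_one]
        rw [← mono_append, ← List.map_append]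
        have h1 : β 0 ≤ β c := hβmono c (by omega) 0 (by omega)
        have h2 : β c ≤ β (c+1) := le_of_lt (hstep c (by omega))
        have hr := List.range'_append (s := β 0) (m := β c - β 0) (n := β (c+1) - β c) (step := 1)
        rw [show β 0 + 1 * (β c - β 0) = β c from by omega] at hr
        rw [show (β c - β 0) + (β (c+1) - β c) = β (c+1) - β 0 from by omega] at hr
        rw [hr]
  have hφu : FreeAlgebra.lift F σφ (mono F n ((List.range n).map vu))
      = mono F n ((List.range' (β 0) (k - β 0)).map v) := by
    rw [lift_mono, List.map_map]
    have hmapeq : (List.range n).map (σφ ∘ vu)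
        = (List.range n).map
          (fun i => mono F n ((List.range' (β i) (β (i+1) - β i)).map v)) := by
      apply List.map_congr_left
      intro i hi
      have hi' : i < n := List.mem_range.mp hi
      show σφ (vu i) = _
      simp [hσφdef, hvudef, hi']
    rw [hmapeq, hblocks n le_rfl, hβn]
  have hsplit : List.range k = List.range' 0 (β 0) ++ List.range' (β 0) (k - β 0) := by
    have h0 : β 0 ≤ k := by
      have := hβmono n le_rfl 0 (by omega)
      omega
    have e1 := List.range'_append (s := 0) (m := β 0) (n := k - β 0) (step := 1)
    rw [show 0 + 1 * β 0 = β 0 from by omega] at e1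
    rw [show β 0 + (k - β 0) = k from by omega] at e1
    rw [List.range_eq_range', ← e1]
  show _ ∈ sInf _
  rw [Ideal.mem_sInf]
  rintro I ⟨hI1, hI2⟩
  have hu : mono F n ((List.range n).map vu) ∈ I :=
    hI2 ⟨(List.range n).map vu, by simp, rfl, huid⟩
  have hφI : FreeAlgebra.lift F σφ (mono F n ((List.range n).map vu)) ∈ I :=
    hI1 (FreeAlgebra.lift F σφ) (graded_lift F n σφ hσφ) _ hu
  rw [hφu] at hφI
  rw [hsplit, List.map_append, mono_append]
  exact I.mul_mem_left _ hφI

end Forward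

/-- a graded monomial `m = x_1⋯x_k` with `k ≥ n` (pairwise distinct
variables) is a graded monomial identity of `BT(n-1,1;F)` if and only if it is a
consequence of the graded monomial identities of `BT(n-1,1;F)` of degree `n`. -/
theorem long_monomial_identity_iff_consequence_of_degree_n
    (F : Type*) [Field F] [CharZero F] (n : ℕ) (hn : 2 ≤ n) [NeZero n]
    (k : ℕ) (hk : n ≤ k)
    (v : ℕ → ZMod n × ℕ) (hv : ((List.range k).map v).Nodup) :
    IsGIdentity F n (BT1gr F n) (mono F n ((List.range k).map v)) ↔
      mono F n ((List.range k).map v) ∈ TIdealGen F n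
        {f : FA F n | ∃ u : List (ZMod n × ℕ), u.length = n ∧
          f = mono F n u ∧ IsGIdentity F n (BT1gr F n) f} := by
  constructor
  · intro hid
    exact forward_mem F n k v hn hid
  · intro h
    refine identity_of_mem_TIdealGen F n _ _ ?_ h
    rintro f ⟨u, -, -, hfid⟩
    exact hfid
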